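/- arXiv:2303.16422 — 7 statements merged into one kernel-verified Lean document; each statement's English description precedes it below -/
import Mathlib

section
/- Let (Ω, ℙ) be a probability space and p, p_S : Ω → ℝ independent random variables with p distributed as the real Gaussian measure with common mean μ and variance σ_p² and p_S distributed as the real Gaussian measure with the same mean μ and variance σ_S², where σ_p, σ_S > 0. Fix β ∈ (0,1], set p̄ = β·p_S + (1−β)·p, Δ = (1−β)²σ_p² + β²σ_S², and p̂ = μ + ((1−β)σ_p²/Δ)·(p̄ − μ). Then the election bias at time zero vanishes, 𝔼[(p̂ − p̄)²] = 0, if and only if (1−β)σ_p² = β·σ_S², i.e. (1−β)/β = σ_S²/σ_p². -/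
/-!
Writing `p̄` for the election outcome and `c = (1 - β) σ_p² / Δ`, the predictor error is
`p̂ - p̄ = (c - 1) (p̄ - μ)`. Since `p̄` has mean `μ`, the bias is `(c - 1)² Var[p̄]`, and by
independence `Var[p̄] = Δ > 0`. So the bias vanishes iff `(1 - β) σ_p² = Δ`, which after
cancelling a factor `β` is `(1 - β) σ_p² = β σ_S²`.
-/

open MeasureTheory ProbabilityTheory
open scoped NNReal

namespace ProbabilityTheory

section GaussianLaw

variable {Ω : Type*} [MeasurableSpace Ω] {P : Measure Ω} {X : Ω → ℝ} {μ : ℝ} {v : ℝ≥0}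

lemma HasLaw.memLp_of_gaussianReal (hX : HasLaw X (gaussianReal μ v) P) (q : ℝ≥0) :
    MemLp X q P := by
  have h := memLp_id_gaussianReal (μ := μ) (v := v) q
  rw [← hX.map_eq, memLp_map_measure_iff aestronglyMeasurable_id hX.aemeasurable] at h
  exact h

lemma HasLaw.integral_eq_of_gaussianReal (hX : HasLaw X (gaussianReal μ v) P) : P[X] = μ :=
  hX.integral_eq.trans integral_id_gaussianReal

lemma HasLaw.variance_eq_of_gaussianReal (hX : HasLaw X (gaussianReal μ v) P) : Var[X; P] = v :=
  hX.variance_eq.trans variance_id_gaussianReal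

end GaussianLaw

section LinearCombination

variable {Ω : Type*} [MeasurableSpace Ω] {P : Measure Ω} {X Y : Ω → ℝ}

lemma integral_const_mul_add_const_mul (hX : Integrable X P) (hY : Integrable Y P) (a b : ℝ) :
    ∫ ω, (a * X ω + b * Y ω) ∂P = a * P[X] + b * P[Y] := by
  rw [integral_add (hX.const_mul a) (hY.const_mul b), integral_const_mul, integral_const_mul]

lemma IndepFun.variance_const_mul_add_const_mul (hXY : IndepFun X Y P) (hX : MemLp X 2 P)
    (hY : MemLp Y 2 P) (a b : ℝ) :
    Var[fun ω ↦ a * X ω + b * Y ω; P] = a ^ 2 * Var[X; P] + b ^ 2 * Var[Y; P] := by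
  have h := (hXY.comp (measurable_const_mul a) (measurable_const_mul b)).variance_fun_add
    (hX.const_mul a) (hY.const_mul b)
  rw [h, variance_const_mul, variance_const_mul]

end LinearCombination

end ProbabilityTheory

lemma integral_sq_linear_predictor_sub {Ω : Type*} [MeasurableSpace Ω] {P : Measure Ω}
    {Z : Ω → ℝ} (hZ : AEMeasurable Z P) {m : ℝ} (hm : P[Z] = m) (c : ℝ) :
    ∫ ω, (m + c * (Z ω - m) - Z ω) ^ 2 ∂P = (c - 1) ^ 2 * Var[Z; P] := by
  have h : ∀ ω, (m + c * (Z ω - m) - Z ω) ^ 2 = (c - 1) ^ 2 * (Z ω - m) ^ 2 := fun ω => by ring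
  simp_rw [h, integral_const_mul, variance_eq_integral hZ, hm]

lemma sq_div_sub_one_mul_eq_zero_iff {a d : ℝ} (hd : d ≠ 0) : (a / d - 1) ^ 2 * d = 0 ↔ a = d := by
  rw [mul_eq_zero, or_iff_left hd, sq_eq_zero_iff, sub_eq_zero, div_eq_one_iff_eq hd]

lemma mul_eq_sq_mul_add_sq_mul_iff {β a b : ℝ} (hβ : β ≠ 0) :
    (1 - β) * a = (1 - β) ^ 2 * a + β ^ 2 * b ↔ (1 - β) * a = β * b := by
  constructor
  · intro h
    exact mul_left_cancel₀ hβ (by linear_combination h)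
  · intro h
    linear_combination β * h

theorem zero_bias_at_time_zero_iff_general
    {Ω : Type*} [MeasurableSpace Ω] {P : Measure Ω} [IsProbabilityMeasure P]
    (p pS : Ω → ℝ) (hp : Measurable p) (hpS : Measurable pS)
    (hindep : IndepFun p pS P)
    (μ σp σS : ℝ) (hσS : 0 < σS)
    (hpd : P.map p = gaussianReal μ ⟨σp ^ 2, sq_nonneg σp⟩)
    (hpSd : P.map pS = gaussianReal μ ⟨σS ^ 2, sq_nonneg σS⟩)
    (β : ℝ) (hβ : β ∈ Set.Ioc (0 : ℝ) 1) :
    (∫ ω, ((μ + ((1 - β) * σp ^ 2 / ((1 - β) ^ 2 * σp ^ 2 + β ^ 2 * σS ^ 2)) *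
        ((β * pS ω + (1 - β) * p ω) - μ))
        - (β * pS ω + (1 - β) * p ω)) ^ 2 ∂P = 0)
      ↔ (1 - β) * σp ^ 2 = β * σS ^ 2 := by
  have hpLaw : HasLaw p (gaussianReal μ ⟨σp ^ 2, sq_nonneg σp⟩) P := ⟨hp.aemeasurable, hpd⟩
  have hpSLaw : HasLaw pS (gaussianReal μ ⟨σS ^ 2, sq_nonneg σS⟩) P := ⟨hpS.aemeasurable, hpSd⟩
  have hmean : ∫ ω, (β * pS ω + (1 - β) * p ω) ∂P = μ := by
    rw [integral_const_mul_add_const_mul ((hpSLaw.memLp_of_gaussianReal 1).integrable le_rfl)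
      ((hpLaw.memLp_of_gaussianReal 1).integrable le_rfl), hpSLaw.integral_eq_of_gaussianReal,
      hpLaw.integral_eq_of_gaussianReal]
    ring
  have hvar : Var[fun ω ↦ β * pS ω + (1 - β) * p ω; P]
      = (1 - β) ^ 2 * σp ^ 2 + β ^ 2 * σS ^ 2 := by
    rw [hindep.symm.variance_const_mul_add_const_mul (hpSLaw.memLp_of_gaussianReal 2)
      (hpLaw.memLp_of_gaussianReal 2), hpSLaw.variance_eq_of_gaussianReal,
      hpLaw.variance_eq_of_gaussianReal]
    -- the coercion of `⟨σ ^ 2, _⟩ : ℝ≥0` to `ℝ` is `σ ^ 2` by `rfl`, though not syntactically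
    exact add_comm _ _
  have hΔ : (1 - β) ^ 2 * σp ^ 2 + β ^ 2 * σS ^ 2 ≠ 0 := by
    have := hβ.1; positivity
  rw [integral_sq_linear_predictor_sub (by fun_prop) hmean, hvar,
    sq_div_sub_one_mul_eq_zero_iff hΔ, mul_eq_sq_mul_add_sq_mul_iff hβ.1.ne']

/-- Zero bias at time zero: with independent Gaussian `p`, `p_S` of common mean `μ`,
`p̄ = β·p_S + (1−β)·p`, `Δ = (1−β)²σ_p² + β²σ_S²`, and
`p̂ = μ + ((1−β)σ_p²/Δ)·(p̄ − μ)`, the election bias `𝔼[(p̂ − p̄)²]` vanishes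
if and only if `(1−β)σ_p² = β·σ_S²`. -/
theorem zero_bias_at_time_zero_iff
    {Ω : Type*} [MeasurableSpace Ω] {P : Measure Ω} [IsProbabilityMeasure P]
    (p pS : Ω → ℝ) (hp : Measurable p) (hpS : Measurable pS)
    (hindep : IndepFun p pS P)
    (μ σp σS : ℝ) (hσp : 0 < σp) (hσS : 0 < σS)
    (hpd : P.map p = gaussianReal μ ⟨σp ^ 2, sq_nonneg σp⟩)
    (hpSd : P.map pS = gaussianReal μ ⟨σS ^ 2, sq_nonneg σS⟩)
    (β : ℝ) (hβ : β ∈ Set.Ioc (0 : ℝ) 1) :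
    (∫ ω, ((μ + ((1 - β) * σp ^ 2 / ((1 - β) ^ 2 * σp ^ 2 + β ^ 2 * σS ^ 2)) *
        ((β * pS ω + (1 - β) * p ω) - μ))
        - (β * pS ω + (1 - β) * p ω)) ^ 2 ∂P = 0)
      ↔ (1 - β) * σp ^ 2 = β * σS ^ 2 :=
  zero_bias_at_time_zero_iff_general p pS hp hpS hindep μ σp σS hσS hpd hpSd β hβ
end

section
/- Fix β ∈ (0,1), ξ ∈ (1/2, 1], and set α₁(η) = 1 − βη − 2(1−η)(1−ξ) for η ∈ [0,1]. Then α₁(η)² + β²η² > 0 for all η ∈ [0,1], and the function g(η) = β²η² / (α₁(η)² + β²η²) is strictly monotonically increasing on [0,1]. Consequently, for any σ > 0 the positive welfare W_P(η) = −σ²·g(η) is strictly decreasing in the share of stereotypes η. -/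
/-!
Write `α₁(η) = (1 - η)(2ξ - 1) + η(1 - β)`: an affine function that is positive at both ends
of `[0, 1]`, hence positive on it, and whose intercept `α₁(0) = 2ξ - 1` is positive. The latter
makes `α₁(η) / η` strictly decreasing, i.e. `βη / α₁(η)` strictly increasing, and
`g = t² / (1 + t²)` at `t = βη / α₁(η)` is then strictly increasing as well.
-/

open Set

theorem strictMonoOn_sq_div_sq_add_sq {u v : ℝ → ℝ} {s : Set ℝ}
    (hu : ∀ x ∈ s, 0 ≤ u x) (hv : ∀ x ∈ s, 0 < v x)
    (hcross : ∀ x ∈ s, ∀ y ∈ s, x < y → u x * v y < u y * v x) :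
    StrictMonoOn (fun x => u x ^ 2 / (v x ^ 2 + u x ^ 2)) s := by
  intro x hx y hy hxy
  have hvx := hv x hx
  have hvy := hv y hy
  rw [div_lt_div_iff₀ (by positivity) (by positivity)]
  have hsq : (u x * v y) ^ 2 < (u y * v x) ^ 2 :=
    pow_lt_pow_left₀ (hcross x hx y hy hxy) (mul_nonneg (hu x hx) hvy.le) two_ne_zero
  linarith

def alpha₁ (β ξ η : ℝ) : ℝ := 1 - β * η - 2 * (1 - η) * (1 - ξ)

theorem alpha₁_eq_convexCombination (β ξ η : ℝ) :
    alpha₁ β ξ η = (1 - η) * (2 * ξ - 1) + η * (1 - β) := by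
  unfold alpha₁; ring

theorem alpha₁_pos {β ξ η : ℝ} (hβ : β < 1) (hξ : 1 / 2 < ξ) (hη : η ∈ Icc (0 : ℝ) 1) :
    0 < alpha₁ β ξ η := by
  rw [alpha₁_eq_convexCombination]
  exact convex_Ioi (0 : ℝ) (show 0 < 2 * ξ - 1 by linarith) (sub_pos.2 hβ)
    (sub_nonneg.2 hη.2) hη.1 (sub_add_cancel 1 η)

theorem mul_alpha₁_lt_mul_alpha₁ (β : ℝ) {ξ x y : ℝ} (hξ : 1 / 2 < ξ) (hxy : x < y) :
    x * alpha₁ β ξ y < y * alpha₁ β ξ x := by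
  have hdiff : y * alpha₁ β ξ x - x * alpha₁ β ξ y = (2 * ξ - 1) * (y - x) := by
    unfold alpha₁; ring
  have : 0 < (2 * ξ - 1) * (y - x) := mul_pos (by linarith) (sub_pos.2 hxy)
  linarith

/-- Algebraic core of Proposition 1(i): with `α₁(η) = 1 − βη − 2(1−η)(1−ξ)`,
the denominator `α₁(η)² + β²η²` is positive on `[0,1]`, the ratio
`g(η) = β²η²/(α₁(η)² + β²η²)` is strictly increasing on `[0,1]`, and hence the
positive welfare `W_P(η) = −σ²·g(η)` is strictly decreasing in the share of
stereotypes `η`. -/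
theorem positive_welfare_decreasing_in_stereotype_share
    (β ξ : ℝ) (hβ : β ∈ Set.Ioo (0 : ℝ) 1) (hξ : ξ ∈ Set.Ioc (1/2 : ℝ) 1) :
    (∀ η ∈ Set.Icc (0 : ℝ) 1,
        0 < (1 - β * η - 2 * (1 - η) * (1 - ξ)) ^ 2 + β ^ 2 * η ^ 2)
    ∧ StrictMonoOn
        (fun η : ℝ => β ^ 2 * η ^ 2 /
          ((1 - β * η - 2 * (1 - η) * (1 - ξ)) ^ 2 + β ^ 2 * η ^ 2))
        (Set.Icc 0 1)
    ∧ ∀ σ : ℝ, 0 < σ →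
        StrictAntiOn
          (fun η : ℝ => -σ ^ 2 * (β ^ 2 * η ^ 2 /
            ((1 - β * η - 2 * (1 - η) * (1 - ξ)) ^ 2 + β ^ 2 * η ^ 2)))
          (Set.Icc 0 1) := by
  have hα : ∀ η ∈ Icc (0 : ℝ) 1, 0 < alpha₁ β ξ η := fun η hη => alpha₁_pos hβ.2 hξ.1 hη
  have hmono : StrictMonoOn (fun η : ℝ => β ^ 2 * η ^ 2 / (alpha₁ β ξ η ^ 2 + β ^ 2 * η ^ 2))
      (Icc 0 1) := by
    simpa only [mul_pow] using strictMonoOn_sq_div_sq_add_sq (u := fun η => β * η)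
      (fun η hη => mul_nonneg hβ.1.le hη.1) hα fun x _ y _ hxy => by
        simpa only [mul_assoc] using
          mul_lt_mul_of_pos_left (mul_alpha₁_lt_mul_alpha₁ β hξ.1 hxy) hβ.1
  refine ⟨fun η hη => ?_, hmono, fun σ hσ x hx y hy hxy => ?_⟩
  · have := hα η hη
    show 0 < alpha₁ β ξ η ^ 2 + β ^ 2 * η ^ 2
    positivity
  · exact mul_lt_mul_of_neg_left (hmono hx hy hxy) (by simp only [neg_lt_zero]; positivity)
end

section
/- Fix β ∈ (0,1), ξ ∈ (1/2, 1], σ > 0, and set α₁(η) = 1 − βη − 2(1−η)(1−ξ) and W_P(η) = −σ²·β²η²/(α₁(η)² + β²η²). If the share of stereotypes evolves as η(t) = exp(−λt), then: (i) for every fixed λ > 0, the map t ↦ W_P(exp(−λt)) is strictly increasing on [0, ∞); and (ii) for every fixed t > 0, the map λ ↦ W_P(exp(−λt)) is strictly increasing on (0, ∞). -/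
/-!
Writing `α₁(η) = η · g(η)` with `g(η) = (2ξ - 1)/η + 2(1 - ξ) - β` and cancelling `η²` gives
`W_P(η) = -σ²β² / (g(η)² + β²)`. For `ξ > 1/2` the function `g` is strictly decreasing on
`(0, 1]` and bounded below by `g(1) = 1 - β ≥ 0`, so `W_P` is strictly decreasing in the share
`η` of stereotypes. Finally `exp (-λt)` is strictly decreasing in `t` and in `λ` with values in
`(0, 1]`.
-/

open Set Real

lemma strictMonoOn_neg_div_sq_add {c b : ℝ} (hc : 0 < c) (hb : 0 < b) :
    StrictMonoOn (fun x : ℝ => -c / (x ^ 2 + b)) (Ici 0) := by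
  intro x hx y _ hxy
  have hsq : x ^ 2 < y ^ 2 := pow_lt_pow_left₀ hxy hx two_ne_zero
  simp only [neg_div, neg_lt_neg_iff]
  exact div_lt_div_of_pos_left hc (by positivity) (by linarith)

lemma strictAntiOn_div_add {a : ℝ} (ha : 0 < a) (d : ℝ) :
    StrictAntiOn (fun x : ℝ => a / x + d) (Ioi 0) := by
  intro x hx y _ hxy
  simpa using div_lt_div_of_pos_left ha hx hxy

lemma exp_neg_mem_Ioc {x : ℝ} (hx : 0 ≤ x) : exp (-x) ∈ Ioc 0 1 :=
  ⟨exp_pos _, exp_le_one_iff.mpr (neg_nonpos.mpr hx)⟩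

def alphaOne (β ξ η : ℝ) : ℝ := 1 - β * η - 2 * (1 - η) * (1 - ξ)

noncomputable def alphaOneDivShare (β ξ η : ℝ) : ℝ := (2 * ξ - 1) / η + (2 * (1 - ξ) - β)

noncomputable def positiveWelfare (σ β ξ η : ℝ) : ℝ :=
  -σ ^ 2 * (β ^ 2 * η ^ 2) / (alphaOne β ξ η ^ 2 + β ^ 2 * η ^ 2)

section

variable {σ β ξ η : ℝ}

lemma alphaOne_eq_mul_alphaOneDivShare (hη : η ≠ 0) :
    alphaOne β ξ η = η * alphaOneDivShare β ξ η := by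
  rw [alphaOne, alphaOneDivShare]
  field_simp
  ring

lemma positiveWelfare_eq (hη : η ≠ 0) :
    positiveWelfare σ β ξ η = -σ ^ 2 * β ^ 2 / (alphaOneDivShare β ξ η ^ 2 + β ^ 2) :=
  calc positiveWelfare σ β ξ η
      = -σ ^ 2 * β ^ 2 * η ^ 2 / ((alphaOneDivShare β ξ η ^ 2 + β ^ 2) * η ^ 2) := by
        rw [positiveWelfare, alphaOne_eq_mul_alphaOneDivShare hη]
        ring
    _ = _ := mul_div_mul_right _ _ (pow_ne_zero 2 hη)

lemma alphaOneDivShare_strictAntiOn (hξ : 1 / 2 < ξ) :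
    StrictAntiOn (alphaOneDivShare β ξ) (Ioi 0) :=
  strictAntiOn_div_add (by linarith) _

lemma alphaOneDivShare_nonneg (hβ : β ≤ 1) (hξ : 1 / 2 ≤ ξ) (hη : η ∈ Ioc 0 1) :
    0 ≤ alphaOneDivShare β ξ η := by
  have := le_div_self (by linarith : (0 : ℝ) ≤ 2 * ξ - 1) hη.1 hη.2
  rw [alphaOneDivShare]
  linarith

lemma positiveWelfare_strictAntiOn (hσ : σ ≠ 0) (hβ₀ : 0 < β) (hβ₁ : β ≤ 1) (hξ : 1 / 2 < ξ) :
    StrictAntiOn (positiveWelfare σ β ξ) (Ioc 0 1) := by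
  have hg : StrictAntiOn (alphaOneDivShare β ξ) (Ioc 0 1) :=
    (alphaOneDivShare_strictAntiOn hξ).mono Ioc_subset_Ioi_self
  have hW := (strictMonoOn_neg_div_sq_add (c := σ ^ 2 * β ^ 2) (b := β ^ 2) (by positivity)
    (by positivity)).comp_strictAntiOn hg fun η hη => alphaOneDivShare_nonneg hβ₁ hξ.le hη
  refine hW.congr fun η hη => ?_
  simp only [Function.comp, positiveWelfare_eq hη.1.ne', neg_mul]

end

/-- Proposition 1(i): with the share of stereotypes evolving as `η(t) = exp(−λt)`
and positive welfare `W_P(η) = −σ²·β²η²/(α₁(η)² + β²η²)` where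
`α₁(η) = 1 − βη − 2(1−η)(1−ξ)`, the map `t ↦ W_P(exp(−λt))` is strictly
increasing on `[0,∞)` for every fixed `λ > 0`, and the map `λ ↦ W_P(exp(−λt))`
is strictly increasing on `(0,∞)` for every fixed `t > 0`. -/
theorem positive_welfare_increasing_in_time_and_intensity
    (β ξ σ : ℝ) (hβ : β ∈ Set.Ioo (0 : ℝ) 1) (hξ : ξ ∈ Set.Ioc (1/2 : ℝ) 1)
    (hσ : 0 < σ)
    (WP : ℝ → ℝ)
    (hWP : ∀ η : ℝ, WP η = -σ ^ 2 * (β ^ 2 * η ^ 2) /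
      ((1 - β * η - 2 * (1 - η) * (1 - ξ)) ^ 2 + β ^ 2 * η ^ 2)) :
    (∀ l : ℝ, 0 < l →
        StrictMonoOn (fun t : ℝ => WP (Real.exp (-l * t))) (Set.Ici 0))
    ∧ (∀ t : ℝ, 0 < t →
        StrictMonoOn (fun l : ℝ => WP (Real.exp (-l * t))) (Set.Ioi 0)) := by
  obtain rfl : WP = positiveWelfare σ β ξ := funext hWP
  have hW := positiveWelfare_strictAntiOn hσ.ne' hβ.1 hβ.2.le hξ.1
  refine ⟨fun l hl => hW.comp ?_ ?_, fun t ht => hW.comp ?_ ?_⟩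
  · exact fun t₁ _ t₂ _ h => exp_lt_exp.mpr (by nlinarith)
  · exact fun t ht => by simpa using exp_neg_mem_Ioc (mul_nonneg hl.le ht)
  · exact fun l₁ _ l₂ _ h => exp_lt_exp.mpr (by nlinarith)
  · exact fun l hl => by simpa using exp_neg_mem_Ioc (mul_nonneg (le_of_lt hl) ht.le)
end

section
/- Fix ξ ∈ [1/2, 1), σ > 0, μ ∈ ℝ, and β with 0 < β < 1 − ξ. Then the institutional welfare W_I(η) = −[(1−η)²(1−ξ)²(1−2μ)² + ((βη + 2(1−η)(1−ξ))² + β²η²)·σ²] is strictly monotonically increasing in the share of stereotypes η on [0,1]; equivalently, for every λ > 0 the map t ↦ W_I(exp(−λt)) is strictly monotone on [0,∞). -/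
/-! The share `η` of stereotypes enters the welfare through the squared bias
`(1 - η)² (1 - ξ)² (1 - 2μ)²`, which falls as `η` rises to `1`, and through the weight of `σ²`,
a convex quadratic in `η` whose secant slopes over `[a, b] ⊆ (-∞, 1]` are negative: the slope
is `-(4β(c - β) + ((2c - β)² + β²)(2 - a - b))` with `c = 1 - ξ`, and `β < c` makes it
negative even in the limit `a + b = 2`. Since `exp (-l t)` decreases from `1`, welfare falls
in time. -/

open Set Real

def varianceWeight (β c η : ℝ) : ℝ :=
  (β * η + 2 * (1 - η) * c) ^ 2 + β ^ 2 * η ^ 2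

theorem varianceWeight_sub_varianceWeight (β c a b : ℝ) :
    varianceWeight β c a - varianceWeight β c b =
      (b - a) * (4 * β * (c - β) + ((2 * c - β) ^ 2 + β ^ 2) * (2 - a - b)) := by
  unfold varianceWeight
  ring

theorem strictAntiOn_varianceWeight {β c : ℝ} (hβ : 0 < β) (hβc : β < c) :
    StrictAntiOn (varianceWeight β c) (Iic 1) := by
  intro a ha b hb hab
  have hslope : 0 < 4 * β * (c - β) + ((2 * c - β) ^ 2 + β ^ 2) * (2 - a - b) := by
    have : 0 ≤ 2 - a - b := by linarith [mem_Iic.mp ha, mem_Iic.mp hb]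
    have : 0 < β * (c - β) := mul_pos hβ (sub_pos.mpr hβc)
    positivity
  have := varianceWeight_sub_varianceWeight β c a b
  linarith [mul_pos (sub_pos.mpr hab) hslope]

theorem antitoneOn_one_sub_sq : AntitoneOn (fun η : ℝ => (1 - η) ^ 2) (Iic 1) :=
  fun _ _ _ hb hab => pow_le_pow_left₀ (sub_nonneg.mpr hb) (sub_le_sub_left hab 1) 2

def institutionalWelfare (ξ μ σ β η : ℝ) : ℝ :=
  -((1 - η) ^ 2 * (1 - ξ) ^ 2 * (1 - 2 * μ) ^ 2 + varianceWeight β (1 - ξ) η * σ ^ 2)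

theorem strictMonoOn_institutionalWelfare {ξ μ σ β : ℝ} (hσ : 0 < σ) (hβ0 : 0 < β)
    (hβ : β < 1 - ξ) : StrictMonoOn (institutionalWelfare ξ μ σ β) (Iic 1) := by
  intro a ha b hb hab
  have hbias : (1 - b) ^ 2 * (1 - ξ) ^ 2 * (1 - 2 * μ) ^ 2 ≤
      (1 - a) ^ 2 * (1 - ξ) ^ 2 * (1 - 2 * μ) ^ 2 := by
    gcongr ?_ * _ * _
    exact antitoneOn_one_sub_sq ha hb hab.le
  have hvar : varianceWeight β (1 - ξ) b * σ ^ 2 < varianceWeight β (1 - ξ) a * σ ^ 2 :=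
    mul_lt_mul_of_pos_right (strictAntiOn_varianceWeight hβ0 hβ ha hb hab) (by positivity)
  unfold institutionalWelfare
  linarith

theorem strictAnti_exp_neg_mul {l : ℝ} (hl : 0 < l) : StrictAnti fun t : ℝ => exp (-l * t) :=
  fun _ _ hst => exp_lt_exp.mpr (by nlinarith)

theorem mapsTo_exp_neg_mul {l : ℝ} (hl : 0 ≤ l) :
    MapsTo (fun t : ℝ => exp (-l * t)) (Ici 0) (Iic 1) :=
  fun _ ht => exp_le_one_iff.mpr (by nlinarith [mem_Ici.mp ht])

theorem institutional_welfare_monotone_small_beta_general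
    (ξ σ μ β : ℝ) (hσ : 0 < σ)
    (hβ0 : 0 < β) (hβ : β < 1 - ξ) :
    StrictMonoOn
      (fun η : ℝ => -((1 - η) ^ 2 * (1 - ξ) ^ 2 * (1 - 2 * μ) ^ 2 +
        ((β * η + 2 * (1 - η) * (1 - ξ)) ^ 2 + β ^ 2 * η ^ 2) * σ ^ 2))
      (Set.Icc 0 1)
    ∧ ∀ l : ℝ, 0 < l →
        StrictAntiOn
          (fun t : ℝ => -((1 - Real.exp (-l * t)) ^ 2 * (1 - ξ) ^ 2 * (1 - 2 * μ) ^ 2 +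
            ((β * Real.exp (-l * t) + 2 * (1 - Real.exp (-l * t)) * (1 - ξ)) ^ 2
              + β ^ 2 * Real.exp (-l * t) ^ 2) * σ ^ 2))
          (Set.Ici 0) := by
  have hW := strictMonoOn_institutionalWelfare (μ := μ) hσ hβ0 hβ
  exact ⟨hW.mono Icc_subset_Iic_self, fun l hl =>
    hW.comp_strictAntiOn ((strictAnti_exp_neg_mul hl).strictAntiOn _) (mapsTo_exp_neg_mul hl.le)⟩

/-- First monotone case of Proposition 1(ii): when `0 < β < 1 − ξ`, institutional
welfare `W_I(η) = −[(1−η)²(1−ξ)²(1−2μ)² + ((βη + 2(1−η)(1−ξ))² + β²η²)σ²]` is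
strictly increasing in the share of stereotypes `η` on `[0,1]`; equivalently,
for every `λ > 0` the map `t ↦ W_I(exp(−λt))` is strictly monotone (decreasing)
on `[0,∞)`. -/
theorem institutional_welfare_monotone_small_beta
    (ξ σ μ β : ℝ) (hξ : ξ ∈ Set.Ico (1/2 : ℝ) 1) (hσ : 0 < σ)
    (hβ0 : 0 < β) (hβ : β < 1 - ξ) :
    StrictMonoOn
      (fun η : ℝ => -((1 - η) ^ 2 * (1 - ξ) ^ 2 * (1 - 2 * μ) ^ 2 +
        ((β * η + 2 * (1 - η) * (1 - ξ)) ^ 2 + β ^ 2 * η ^ 2) * σ ^ 2))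
      (Set.Icc 0 1)
    ∧ ∀ l : ℝ, 0 < l →
        StrictAntiOn
          (fun t : ℝ => -((1 - Real.exp (-l * t)) ^ 2 * (1 - ξ) ^ 2 * (1 - 2 * μ) ^ 2 +
            ((β * Real.exp (-l * t) + 2 * (1 - Real.exp (-l * t)) * (1 - ξ)) ^ 2
              + β ^ 2 * Real.exp (-l * t) ^ 2) * σ ^ 2))
          (Set.Ici 0) :=
  institutional_welfare_monotone_small_beta_general ξ σ μ β hσ hβ0 hβ
end

section
/- Fix ξ ∈ [1/2, 1], σ > 0, μ ∈ ℝ, and β > 0 with 2βσ² > (1−ξ)·((1−2μ)² + 4σ²). Then the institutional welfare W_I(η) = −[(1−η)²(1−ξ)²(1−2μ)² + ((βη + 2(1−η)(1−ξ))² + β²η²)·σ²] is strictly monotonically decreasing in the share of stereotypes η on [0,1]. -/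
/-!
Expanding the bracket, `W_I(η) = -(a η² + b η + c)` with
`a = (1-ξ)²(1-2μ)² + σ²((β - 2(1-ξ))² + β²)` and `b = 2(1-ξ)(2βσ² - (1-ξ)((1-2μ)² + 4σ²))`.
The hypothesis on `β` gives `b ≥ 0` and forces `βσ² > 0`, hence `a > 0`; a quadratic with
positive leading coefficient and nonnegative linear coefficient is strictly increasing on `[0, ∞)`.
-/

open Set

theorem strictMonoOn_quadratic_Ici {a b c : ℝ} (ha : 0 < a) (hb : 0 ≤ b) :
    StrictMonoOn (fun x => a * x ^ 2 + b * x + c) (Ici 0) := by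
  intro x hx y hy hxy
  have hsum : 0 < x + y := by linarith [mem_Ici.mp hx, mem_Ici.mp hy]
  have hfactor : 0 < (y - x) * (a * (x + y) + b) :=
    mul_pos (sub_pos.mpr hxy) (add_pos_of_pos_of_nonneg (mul_pos ha hsum) hb)
  linear_combination hfactor

theorem institutional_welfare_decreasing_large_beta_general
    (ξ σ μ β : ℝ) (hξ : ξ ∈ Set.Icc (1/2 : ℝ) 1)
    (hβ : (1 - ξ) * ((1 - 2 * μ) ^ 2 + 4 * σ ^ 2) < 2 * β * σ ^ 2) :
    StrictAntiOn
      (fun η : ℝ => -((1 - η) ^ 2 * (1 - ξ) ^ 2 * (1 - 2 * μ) ^ 2 +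
        ((β * η + 2 * (1 - η) * (1 - ξ)) ^ 2 + β ^ 2 * η ^ 2) * σ ^ 2))
      (Set.Icc 0 1) := by
  have hd : 0 ≤ 1 - ξ := sub_nonneg.mpr hξ.2
  have hβσ : 0 < β * σ ^ 2 := by
    nlinarith [mul_nonneg hd (add_nonneg (sq_nonneg (1 - 2 * μ)) (sq_nonneg (2 * σ)))]
  have hβ0 : β ≠ 0 := left_ne_zero_of_mul hβσ.ne'
  have hσ : σ ≠ 0 := pow_ne_zero_iff two_ne_zero |>.mp (right_ne_zero_of_mul hβσ.ne')
  have ha : 0 < (1 - ξ) ^ 2 * (1 - 2 * μ) ^ 2 + σ ^ 2 * ((β - 2 * (1 - ξ)) ^ 2 + β ^ 2) := by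
    positivity
  have hb : 0 ≤ 2 * (1 - ξ) * (2 * β * σ ^ 2 - (1 - ξ) * ((1 - 2 * μ) ^ 2 + 4 * σ ^ 2)) :=
    mul_nonneg (by positivity) (sub_nonneg.mpr hβ.le)
  refine (((strictMonoOn_quadratic_Ici (c := (1 - ξ) ^ 2 * ((1 - 2 * μ) ^ 2 + 4 * σ ^ 2))
    ha hb).mono Icc_subset_Ici_self).neg).congr fun η _ => ?_
  ring

/-- Second monotone case of Proposition 1(ii): when `β > 0` and
`2βσ² > (1−ξ)((1−2μ)² + 4σ²)`, institutional welfare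
`W_I(η) = −[(1−η)²(1−ξ)²(1−2μ)² + ((βη + 2(1−η)(1−ξ))² + β²η²)σ²]` is strictly
decreasing in the share of stereotypes `η` on `[0,1]`. -/
theorem institutional_welfare_decreasing_large_beta
    (ξ σ μ β : ℝ) (hξ : ξ ∈ Set.Icc (1/2 : ℝ) 1) (hσ : 0 < σ) (hβ0 : 0 < β)
    (hβ : (1 - ξ) * ((1 - 2 * μ) ^ 2 + 4 * σ ^ 2) < 2 * β * σ ^ 2) :
    StrictAntiOn
      (fun η : ℝ => -((1 - η) ^ 2 * (1 - ξ) ^ 2 * (1 - 2 * μ) ^ 2 +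
        ((β * η + 2 * (1 - η) * (1 - ξ)) ^ 2 + β ^ 2 * η ^ 2) * σ ^ 2))
      (Set.Icc 0 1) :=
  institutional_welfare_decreasing_large_beta_general ξ σ μ β hξ hβ
end

section
/- Fix ξ ∈ [1/2, 1), σ > 0, μ ∈ ℝ, and β with β > 1 − ξ and 2βσ² < (1−ξ)·((1−2μ)² + 4σ²). Set K = (1−2μ)² + 4σ², N = 2(1−ξ)((1−ξ)K − 2βσ²), D = 4β²σ² − 8β(1−ξ)σ² + 2(1−ξ)²K, and η* = N/D. Then η* ∈ (0,1), and the institutional welfare W_I(η) = −[(1−η)²(1−ξ)²(1−2μ)² + ((βη + 2(1−η)(1−ξ))² + β²η²)·σ²] is strictly increasing on [0, η*] and strictly decreasing on [η*, 1]. Consequently, for every λ > 0, the map t ↦ W_I(exp(−λt)) attains an interior maximum at the finite time t* = −(1/λ)·log(η*). -/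
/-!
`W_I` is a concave quadratic in `η`: `W_I η = W_I 0 + N η - (D/2) η²`, so
`W_I η = W_I η* - (D/2)(η - η*)²` with vertex `η* = N/D`. The hypotheses give
`0 < N` and `D - N = 4βσ²(β - (1 - ξ)) > 0`, so `0 < η* < 1` and `D > 0`. Finally
`t* = -(1/λ) log η*` is exactly the time at which `exp(-λt)` reaches `η*`.
-/

section VertexForm

variable {f : ℝ → ℝ} {c v : ℝ}

theorem strictMonoOn_Iic_of_eq_sub_mul_sq (hc : 0 < c)
    (hf : ∀ x, f x = f v - c * (x - v) ^ 2) : StrictMonoOn f (Set.Iic v) := by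
  intro x hx y hy hxy
  rw [hf x, hf y]
  have : (y - v) ^ 2 < (x - v) ^ 2 := by nlinarith [Set.mem_Iic.1 hy]
  nlinarith

theorem strictAntiOn_Ici_of_eq_sub_mul_sq (hc : 0 < c)
    (hf : ∀ x, f x = f v - c * (x - v) ^ 2) : StrictAntiOn f (Set.Ici v) := by
  intro x hx y hy hxy
  rw [hf x, hf y]
  have : (x - v) ^ 2 < (y - v) ^ 2 := by nlinarith [Set.mem_Ici.1 hx]
  nlinarith

theorem le_of_eq_sub_mul_sq (hc : 0 ≤ c)
    (hf : ∀ x, f x = f v - c * (x - v) ^ 2) (x : ℝ) : f x ≤ f v := by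
  rw [hf x]
  nlinarith [sq_nonneg (x - v)]

end VertexForm

theorem Real.exp_neg_mul_neg_one_div_mul_log {l η : ℝ} (hl : l ≠ 0) (hη : 0 < η) :
    Real.exp (-l * (-(1 / l) * Real.log η)) = η := by
  rw [show -l * (-(1 / l) * Real.log η) = Real.log η by field_simp, Real.exp_log hη]

theorem institutional_welfare_eq_vertex_form {ξ σ μ β K N D ηstar : ℝ}
    (hK : K = (1 - 2 * μ) ^ 2 + 4 * σ ^ 2)
    (hN : N = 2 * (1 - ξ) * ((1 - ξ) * K - 2 * β * σ ^ 2))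
    (hD : D = 4 * β ^ 2 * σ ^ 2 - 8 * β * (1 - ξ) * σ ^ 2 + 2 * (1 - ξ) ^ 2 * K)
    (hvertex : D * ηstar = N) {WI : ℝ → ℝ}
    (hWI : ∀ η : ℝ, WI η = -((1 - η) ^ 2 * (1 - ξ) ^ 2 * (1 - 2 * μ) ^ 2 +
      ((β * η + 2 * (1 - η) * (1 - ξ)) ^ 2 + β ^ 2 * η ^ 2) * σ ^ 2)) (η : ℝ) :
    WI η = WI ηstar - D / 2 * (η - ηstar) ^ 2 := by
  subst hK hN hD
  rw [hWI, hWI]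
  linear_combination (ηstar - η) * hvertex

/-- Interior (non-monotone) case of Proposition 1(ii): when `β > 1 − ξ` and
`2βσ² < (1−ξ)((1−2μ)² + 4σ²)`, setting `K = (1−2μ)² + 4σ²`,
`N = 2(1−ξ)((1−ξ)K − 2βσ²)`, `D = 4β²σ² − 8β(1−ξ)σ² + 2(1−ξ)²K`, `η* = N/D`,
the institutional welfare `W_I` is strictly increasing on `[0, η*]` and strictly
decreasing on `[η*, 1]`, with `η* ∈ (0,1)`; hence for every `λ > 0` the map
`t ↦ W_I(exp(−λt))` attains an interior maximum at the finite time
`t* = −(1/λ)·log η* > 0`. -/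
theorem institutional_welfare_interior_maximum
    (ξ σ μ β : ℝ) (hξ : ξ ∈ Set.Ico (1/2 : ℝ) 1) (hσ : 0 < σ)
    (hβ1 : 1 - ξ < β)
    (hβ2 : 2 * β * σ ^ 2 < (1 - ξ) * ((1 - 2 * μ) ^ 2 + 4 * σ ^ 2))
    (K N D ηstar : ℝ)
    (hK : K = (1 - 2 * μ) ^ 2 + 4 * σ ^ 2)
    (hN : N = 2 * (1 - ξ) * ((1 - ξ) * K - 2 * β * σ ^ 2))
    (hD : D = 4 * β ^ 2 * σ ^ 2 - 8 * β * (1 - ξ) * σ ^ 2 + 2 * (1 - ξ) ^ 2 * K)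
    (hηstar : ηstar = N / D)
    (WI : ℝ → ℝ)
    (hWI : ∀ η : ℝ, WI η = -((1 - η) ^ 2 * (1 - ξ) ^ 2 * (1 - 2 * μ) ^ 2 +
      ((β * η + 2 * (1 - η) * (1 - ξ)) ^ 2 + β ^ 2 * η ^ 2) * σ ^ 2)) :
    ηstar ∈ Set.Ioo (0 : ℝ) 1
    ∧ StrictMonoOn WI (Set.Icc 0 ηstar)
    ∧ StrictAntiOn WI (Set.Icc ηstar 1)
    ∧ ∀ l : ℝ, 0 < l →
        0 < -(1 / l) * Real.log ηstar
        ∧ ∀ t : ℝ, 0 ≤ t →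
            WI (Real.exp (-l * t))
              ≤ WI (Real.exp (-l * (-(1 / l) * Real.log ηstar))) := by
  have hξ1 : 0 < 1 - ξ := sub_pos.2 hξ.2
  have hN_pos : 0 < N := hN ▸ mul_pos (by positivity) (by rw [hK]; linarith)
  have hD_sub_N : D - N = 4 * β * σ ^ 2 * (β - (1 - ξ)) := by rw [hD, hN]; ring
  have hN_lt_D : N < D := by
    have : 0 < 4 * β * σ ^ 2 * (β - (1 - ξ)) :=
      mul_pos (by have := hξ1.trans hβ1; positivity) (sub_pos.2 hβ1)
    linarith
  have hD_pos : 0 < D := hN_pos.trans hN_lt_D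
  have hmem : ηstar ∈ Set.Ioo (0 : ℝ) 1 :=
    hηstar ▸ ⟨div_pos hN_pos hD_pos, (div_lt_one hD_pos).2 hN_lt_D⟩
  have hform : ∀ η, WI η = WI ηstar - D / 2 * (η - ηstar) ^ 2 :=
    institutional_welfare_eq_vertex_form hK hN hD
      (by rw [hηstar]; field_simp) hWI
  refine ⟨hmem,
    (strictMonoOn_Iic_of_eq_sub_mul_sq (half_pos hD_pos) hform).mono Set.Icc_subset_Iic_self,
    (strictAntiOn_Ici_of_eq_sub_mul_sq (half_pos hD_pos) hform).mono Set.Icc_subset_Ici_self,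
    fun l hl => ⟨?_, fun t _ => ?_⟩⟩
  · exact mul_pos_of_neg_of_neg (neg_neg_of_pos (one_div_pos.2 hl))
      (Real.log_neg hmem.1 hmem.2)
  · rw [Real.exp_neg_mul_neg_one_div_mul_log hl.ne' hmem.1]
    exact le_of_eq_sub_mul_sq (half_pos hD_pos).le hform _
end

section
/- Fix β > 0, ξ ∈ [1/2, 1], μ ∈ ℝ, σ_p, σ_S > 0 and λ > 0, and define the institutional welfare along the critical-thinking path as G(t) = −[(1 − e^{−λt})²(1−ξ)²(1−2μ)² + (βe^{−λt} + 2(1 − e^{−λt})(1−ξ))²·σ_p² + β²e^{−2λt}·σ_S²]. Then G is differentiable at t = 0 with G′(0) = 2βλ·((β − 2(1−ξ))σ_p² + β·σ_S²). In particular, when σ_p = σ_S = σ > 0, G′(0) = 4βλσ²(β + ξ − 1), which is strictly positive if and only if 1 − β < ξ. -/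
/-!
The welfare depends on time only through the share of stereotypes `η(t) = e^{-λt}`
(note `e^{-2λt} = η(t)²`), and it is a polynomial in `η`. By the chain rule
`G'(0) = W'(1) · η'(0) = -λ · W'(1)`, and at `η = 1` the aware term `(1 - η)²` has a double
zero, so only the two variance terms contribute.
-/

/-- The welfare `-𝔼[(p - p̄)²]` in terms of the share `η` of stereotypes. -/
noncomputable def welfareOfShare (β ξ μ σp σS η : ℝ) : ℝ :=
  -((1 - η) ^ 2 * (1 - ξ) ^ 2 * (1 - 2 * μ) ^ 2
    + (β * η + 2 * (1 - η) * (1 - ξ)) ^ 2 * σp ^ 2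
    + β ^ 2 * η ^ 2 * σS ^ 2)

theorem hasDerivAt_welfareOfShare (β ξ μ σp σS η : ℝ) :
    HasDerivAt (welfareOfShare β ξ μ σp σS)
      (2 * (1 - η) * (1 - ξ) ^ 2 * (1 - 2 * μ) ^ 2
        - 2 * (β * η + 2 * (1 - η) * (1 - ξ)) * (β - 2 * (1 - ξ)) * σp ^ 2
        - 2 * β ^ 2 * η * σS ^ 2) η := by
  have hid := hasDerivAt_id' η
  have hAware := ((hid.const_sub 1).pow 2).mul_const ((1 - ξ) ^ 2 * (1 - 2 * μ) ^ 2)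
  have hStable := (((hid.const_mul β).add
    (((hid.const_sub 1).const_mul 2).mul_const (1 - ξ))).pow 2).mul_const (σp ^ 2)
  have hStereo := ((hid.pow 2).const_mul (β ^ 2)).mul_const (σS ^ 2)
  refine (((hAware.add hStable).add hStereo).neg.congr_deriv ?_).congr_of_eventuallyEq
    (.of_forall fun y => ?_)
  · simp only [Pi.add_apply]
    norm_num
    ring
  · simp only [welfareOfShare, Pi.neg_apply, Pi.add_apply, Pi.pow_apply]
    ring

theorem hasDerivAt_exp_const_mul_zero (c : ℝ) :
    HasDerivAt (fun t : ℝ => Real.exp (c * t)) c 0 := by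
  simpa using ((hasDerivAt_id (0 : ℝ)).const_mul c).exp

theorem institutional_welfare_deriv_at_zero_general
    (β ξ μ σp σS l : ℝ) (hβ : 0 < β) (hl : 0 < l) :
    HasDerivAt
      (fun t : ℝ => -((1 - Real.exp (-l * t)) ^ 2 * (1 - ξ) ^ 2 * (1 - 2 * μ) ^ 2
        + (β * Real.exp (-l * t) + 2 * (1 - Real.exp (-l * t)) * (1 - ξ)) ^ 2 * σp ^ 2
        + β ^ 2 * Real.exp (-2 * l * t) * σS ^ 2))
      (2 * β * l * ((β - 2 * (1 - ξ)) * σp ^ 2 + β * σS ^ 2)) 0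
    ∧ ∀ σ : ℝ, 0 < σ → σp = σ → σS = σ →
        2 * β * l * ((β - 2 * (1 - ξ)) * σp ^ 2 + β * σS ^ 2)
            = 4 * β * l * σ ^ 2 * (β + ξ - 1)
          ∧ (0 < 4 * β * l * σ ^ 2 * (β + ξ - 1) ↔ 1 - β < ξ) := by
  constructor
  · have hChain : HasDerivAt (welfareOfShare β ξ μ σp σS ∘ fun t => Real.exp (-l * t))
        (2 * β * l * ((β - 2 * (1 - ξ)) * σp ^ 2 + β * σS ^ 2)) 0 :=
      ((hasDerivAt_welfareOfShare β ξ μ σp σS 1).comp_of_eq 0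
        (hasDerivAt_exp_const_mul_zero (-l)) (by simp)).congr_deriv (by ring)
    refine hChain.congr_of_eventuallyEq (.of_forall fun t => ?_)
    simp only [welfareOfShare, Function.comp_apply]
    rw [show -2 * l * t = -l * t + -l * t by ring, Real.exp_add]
    ring
  · rintro σ hσ rfl rfl
    refine ⟨by ring, ?_⟩
    rw [mul_pos_iff_of_pos_left (by positivity)]
    constructor <;> intro h <;> linarith

/-- Time-derivative of institutional welfare at `t = 0`: with
`G(t) = −[(1 − e^{−λt})²(1−ξ)²(1−2μ)² + (βe^{−λt} + 2(1 − e^{−λt})(1−ξ))²σ_p²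
+ β²e^{−2λt}σ_S²]`, `G` is differentiable at `0` with
`G′(0) = 2βλ((β − 2(1−ξ))σ_p² + βσ_S²)`; when `σ_p = σ_S = σ > 0` this equals
`4βλσ²(β + ξ − 1)`, which is strictly positive iff `1 − β < ξ`. -/
theorem institutional_welfare_deriv_at_zero
    (β ξ μ σp σS l : ℝ) (hβ : 0 < β) (hξ : ξ ∈ Set.Icc (1/2 : ℝ) 1)
    (hσp : 0 < σp) (hσS : 0 < σS) (hl : 0 < l) :
    HasDerivAt
      (fun t : ℝ => -((1 - Real.exp (-l * t)) ^ 2 * (1 - ξ) ^ 2 * (1 - 2 * μ) ^ 2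
        + (β * Real.exp (-l * t) + 2 * (1 - Real.exp (-l * t)) * (1 - ξ)) ^ 2 * σp ^ 2
        + β ^ 2 * Real.exp (-2 * l * t) * σS ^ 2))
      (2 * β * l * ((β - 2 * (1 - ξ)) * σp ^ 2 + β * σS ^ 2)) 0
    ∧ ∀ σ : ℝ, 0 < σ → σp = σ → σS = σ →
        2 * β * l * ((β - 2 * (1 - ξ)) * σp ^ 2 + β * σS ^ 2)
            = 4 * β * l * σ ^ 2 * (β + ξ - 1)
          ∧ (0 < 4 * β * l * σ ^ 2 * (β + ξ - 1) ↔ 1 - β < ξ) :=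
  institutional_welfare_deriv_at_zero_general β ξ μ σp σS l hβ hl
end
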